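/- arXiv:2405.06192 — 2 statements merged into one kernel-verified Lean document; each statement's English description precedes it below -/
import Mathlib

section
/- Let p, q be probability density ratios h_tar(s,a,s') = P_tar(s'|s,a)/p_tar(s') and h_src(s,a,s') = P_src(s'|s,a)/p_src(s'). Define the contrastive loss L_NCE = −E_{(s,a,s'_B)~μ_tar} E_{S'^- ~ p_src^{⊗(K−1)}}[ log( h_tar(s,a,s'_B) / ( h_tar(s,a,s'_B) + Σ_{s'_A ∈ S'^-} h_src(s,a,s'_A) ) ) ], where S'^- is a set of K−1 i.i.d. samples from p_src. Then ΔI := I_tar([S,A];S') − I_src([S,A];S') ≥ log(K−1) − L_NCE, up to the approximation that the average of log density ratios over negative samples is replaced by its expectation E_{s'_A ~ p_src}[log h_src(s,a,s'_A)] = I_src. -/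
open Finset

lemma key_prod_sum {S : Type*} [Fintype S] {n : ℕ} (g : Fin n → S → ℝ) :
    ∑ f : Fin n → S, ∏ i, g i (f i) = ∏ i, ∑ t, g i t := by
  rw [← Fintype.piFinset_univ, Finset.sum_prod_piFinset]

lemma jensen_log {n : ℕ} (hn : 0 < n) (x : Fin n → ℝ) (hx : ∀ i, 0 < x i) :
    Real.log n + (∑ i, Real.log (x i)) / n ≤ Real.log (∑ i, x i) := by
  have hn' : (0:ℝ) < n := Nat.cast_pos.mpr hn
  have h := (strictConcaveOn_log_Ioi.concaveOn).le_map_sum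
    (t := Finset.univ) (w := fun _ : Fin n => (n:ℝ)⁻¹) (p := x)
    (fun i _ => by positivity)
    (by simp [Finset.card_univ]; field_simp)
    (fun i _ => Set.mem_Ioi.mpr (hx i))
  simp only [smul_eq_mul, ← Finset.mul_sum] at h
  have hsx : 0 < ∑ i, x i := Finset.sum_pos (fun i _ => hx i) (Finset.univ_nonempty_iff.mpr ⟨⟨0, hn⟩⟩)
  rw [Real.log_mul (by positivity) (ne_of_gt hsx), Real.log_inv] at h
  rw [div_eq_inv_mul]
  linarith

lemma sum_prob_one {S : Type*} [Fintype S] {n : ℕ} (psrc : S → ℝ)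
    (hpsrcsum : ∑ t, psrc t = 1) :
    ∑ f : Fin n → S, ∏ i, psrc (f i) = 1 := by
  rw [key_prod_sum (fun _ t => psrc t)]
  simp [hpsrcsum]

lemma expect_coord {S : Type*} [Fintype S] {n : ℕ} (psrc : S → ℝ)
    (hpsrcsum : ∑ t, psrc t = 1) (G : S → ℝ) (i0 : Fin n) :
    ∑ f : Fin n → S, (∏ i, psrc (f i)) * G (f i0) = ∑ t, psrc t * G t := by
  have step : ∀ f : Fin n → S,
      (∏ i, psrc (f i)) * G (f i0)
        = ∏ i, (psrc (f i) * (if i = i0 then G (f i) else 1)) := by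
    intro f
    rw [Finset.prod_mul_distrib]
    congr 1
    simp [Finset.prod_ite_eq']
  simp only [step]
  rw [key_prod_sum (fun i t => psrc t * (if i = i0 then G t else 1))]
  rw [Finset.prod_eq_single i0]
  · simp
  · intro i _ hi
    simp [hi, hpsrcsum]
  · simp

lemma pointwise_bound {S : Type*} [Fintype S] {n : ℕ} (hn : 0 < n)
    (psrc : S → ℝ) (hpsrcpos : ∀ t, 0 < psrc t) (hpsrcsum : ∑ t, psrc t = 1)
    (h : ℝ) (hh : 0 < h) (F : S → ℝ) (hF : ∀ t, 0 < F t) :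
    Real.log n ≤ Real.log h - (∑ t, psrc t * Real.log (F t))
      - ∑ f : Fin n → S, (∏ i, psrc (f i)) * Real.log (h / (h + ∑ i, F (f i))) := by
  have hn' : (0:ℝ) < n := Nat.cast_pos.mpr hn
  have hprodpos : ∀ f : Fin n → S, 0 ≤ ∏ i, psrc (f i) :=
    fun f => Finset.prod_nonneg (fun i _ => (hpsrcpos _).le)
  have hSpos : ∀ f : Fin n → S, 0 < ∑ i, F (f i) :=
    fun f => Finset.sum_pos (fun i _ => hF _) (Finset.univ_nonempty_iff.mpr ⟨⟨0, hn⟩⟩)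
  -- rewrite log of quotient
  have hlogdiv : ∀ f : Fin n → S,
      Real.log (h / (h + ∑ i, F (f i))) = Real.log h - Real.log (h + ∑ i, F (f i)) :=
    fun f => Real.log_div (ne_of_gt hh) (ne_of_gt (by have := hSpos f; linarith))
  simp only [hlogdiv, mul_sub]
  rw [Finset.sum_sub_distrib, ← Finset.sum_mul, sum_prob_one psrc hpsrcsum, one_mul]
  -- enough: ∑_f ∏psrc * log(h+Sum) ≥ log n + ∑ psrc log F
  have main : Real.log n + ∑ t, psrc t * Real.log (F t)
      ≤ ∑ f : Fin n → S, (∏ i, psrc (f i)) * Real.log (h + ∑ i, F (f i)) := by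
    have ptwise : ∀ f : Fin n → S,
        Real.log n + (∑ i, Real.log (F (f i))) / n ≤ Real.log (h + ∑ i, F (f i)) := by
      intro f
      calc Real.log n + (∑ i, Real.log (F (f i))) / n
          ≤ Real.log (∑ i, F (f i)) := jensen_log hn _ (fun i => hF _)
        _ ≤ Real.log (h + ∑ i, F (f i)) :=
            Real.log_le_log (hSpos f) (by linarith)
    calc Real.log n + ∑ t, psrc t * Real.log (F t)
        = ∑ f : Fin n → S, (∏ i, psrc (f i)) *
            (Real.log n + (∑ i, Real.log (F (f i))) / n) := by
          simp only [mul_add, Finset.sum_add_distrib, ← Finset.sum_mul,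
            sum_prob_one psrc hpsrcsum, one_mul]
          congr 1
          have : ∑ f : Fin n → S, (∏ i, psrc (f i)) * ((∑ i, Real.log (F (f i))) / n)
              = (∑ f : Fin n → S, (∏ i, psrc (f i)) * (∑ i, Real.log (F (f i)))) / n := by
            rw [Finset.sum_div]; congr 1; ext f; ring
          rw [this]
          have : ∑ f : Fin n → S, (∏ i, psrc (f i)) * (∑ i, Real.log (F (f i)))
              = ∑ i : Fin n, ∑ f : Fin n → S, (∏ j, psrc (f j)) * Real.log (F (f i)) := by
            rw [Finset.sum_comm]
            congr 1; ext f; rw [Finset.mul_sum]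
          rw [this]
          simp only [expect_coord psrc hpsrcsum (fun t => Real.log (F t))]
          rw [Finset.sum_const, Finset.card_univ, Fintype.card_fin, nsmul_eq_mul]
          field_simp
      _ ≤ ∑ f : Fin n → S, (∏ i, psrc (f i)) * Real.log (h + ∑ i, F (f i)) :=
          Finset.sum_le_sum (fun f _ => mul_le_mul_of_nonneg_left (ptwise f) (hprodpos f))
  linarith

/-- InfoNCE extension, Theorem 1: the MI gap
`ΔI = I_tar − I_src` is lower bounded by `log(K−1) − L_NCE`, where `L_NCE` is
the contrastive loss with `K−1` i.i.d. negative samples from the source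
next-state marginal `p_src`, and
`I_src = E_{(s,a)~μ_tar, s'~p_src}[log h_src(s,a,s')]` (the expectation
identity replacing the average over negatives). -/
theorem infoNCE_lower_bounds_mi_gap
    {S A : Type*} [Fintype S] [Fintype A]
    (μtar : S → A → S → ℝ) (psrc ptar : S → ℝ)
    (Psrc Ptar : S → A → S → ℝ) (K : ℕ) (hK : 2 ≤ K)
    -- μ_tar is a full-support joint distribution over (s,a,s')
    (hμpos : ∀ s a s', 0 < μtar s a s') (hμsum : ∑ s, ∑ a, ∑ s', μtar s a s' = 1)
    -- marginals and conditionals are positive, p_src is a distribution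
    (hpsrcpos : ∀ s', 0 < psrc s') (hpsrcsum : ∑ s', psrc s' = 1)
    (hptarpos : ∀ s', 0 < ptar s')
    (hPsrcpos : ∀ s a s', 0 < Psrc s a s') (hPtarpos : ∀ s a s', 0 < Ptar s a s') :
    -- density ratios h_tar and h_src
    (fun (htar hsrc : S → A → S → ℝ) =>
      -- L_NCE: expectation over (s,a,s'_B) ~ μ_tar and K−1 i.i.d. negatives from p_src
      (fun LNCE =>
        -- ΔI = I_tar − I_src ≥ log(K−1) − L_NCE
        (∑ s, ∑ a, ∑ s', μtar s a s' * Real.log (htar s a s'))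
          - (∑ s, ∑ a, (∑ t, μtar s a t) * ∑ s', psrc s' * Real.log (hsrc s a s'))
        ≥ Real.log ((K : ℝ) - 1) - LNCE)
      (-(∑ s, ∑ a, ∑ s'B, μtar s a s'B *
          ∑ neg : Fin (K - 1) → S, (∏ i, psrc (neg i)) *
            Real.log (htar s a s'B /
              (htar s a s'B + ∑ i, hsrc s a (neg i))))))
    (fun s a s' => Ptar s a s' / ptar s')
    (fun s a s' => Psrc s a s' / psrc s') := by
  simp only []
  set n := K - 1 with hn_def
  have hn : 0 < n := by omega
  have hcast : ((K:ℝ) - 1) = (n:ℝ) := by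
    rw [hn_def, Nat.cast_sub (by omega : 1 ≤ K)]; norm_num
  set htar : S → A → S → ℝ := fun s a s' => Ptar s a s' / ptar s' with hhtar
  set hsrc : S → A → S → ℝ := fun s a s' => Psrc s a s' / psrc s' with hhsrc
  have hhtarpos : ∀ s a s', 0 < htar s a s' := fun s a s' => div_pos (hPtarpos s a s') (hptarpos s')
  have hhsrcpos : ∀ s a s', 0 < hsrc s a s' := fun s a s' => div_pos (hPsrcpos s a s') (hpsrcpos s')
  rw [ge_iff_le, sub_neg_eq_add, hcast]
  have key : ∀ s a s'B,
      μtar s a s'B * Real.log n ≤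
        μtar s a s'B * Real.log (htar s a s'B)
        - μtar s a s'B * (∑ t, psrc t * Real.log (hsrc s a t))
        - μtar s a s'B * (∑ f : Fin n → S, (∏ i, psrc (f i)) *
            Real.log (htar s a s'B / (htar s a s'B + ∑ i, hsrc s a (f i)))) := by
    intro s a s'B
    have := pointwise_bound hn psrc hpsrcpos hpsrcsum (htar s a s'B) (hhtarpos s a s'B)
      (hsrc s a) (hhsrcpos s a)
    have h2 := mul_le_mul_of_nonneg_left this (hμpos s a s'B).le
    rw [mul_sub, mul_sub] at h2
    exact h2
  have hlog_eq : Real.log n = ∑ s, ∑ a, ∑ s', μtar s a s' * Real.log (n:ℝ) := by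
    simp only [← Finset.sum_mul]
    rw [hμsum, one_mul]
  have hmain : Real.log n ≤
      (∑ s, ∑ a, ∑ s', μtar s a s' * Real.log (htar s a s'))
        - (∑ s, ∑ a, (∑ t, μtar s a t) * ∑ s', psrc s' * Real.log (hsrc s a s'))
        - (∑ s, ∑ a, ∑ s'B, μtar s a s'B *
            ∑ f : Fin n → S, (∏ i, psrc (f i)) *
              Real.log (htar s a s'B / (htar s a s'B + ∑ i, hsrc s a (f i)))) := by
    rw [hlog_eq]
    simp only [Finset.sum_mul, ← Finset.sum_sub_distrib]
    exact Finset.sum_le_sum (fun s _ => Finset.sum_le_sum (fun a _ =>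
      Finset.sum_le_sum (fun s' _ => key s a s')))
  linarith
end

section
/- (Telescoping performance difference) Let M and M̂ be two MDPs on finite state space S and action space A, identical except for transitions P and P̂, with the same reward r bounded by |r| ≤ R_max, discount γ ∈ [0,1), same initial distribution. For any policy π, let η_M(π) denote the discounted return of π in M, V^π_M the value function in M, and ρ̂ the normalized discounted state-action occupancy of π in M̂. Then η_M(π) − η_{M̂}(π) = (γ/(1−γ)) · E_{(s,a)~ρ̂}[ Σ_{s'} (P(s'|s,a) − P̂(s'|s,a)) V^π_M(s') ]. -/
open Finset

/-- One-step evolution of a state-action distribution under kernel `P` and policy `pol`. -/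
noncomputable def stepDist {S A : Type*} [Fintype S] [Fintype A]
    (P : S → A → S → ℝ) (pol : S → A → ℝ) (d : S → A → ℝ) : S → A → ℝ :=
  fun s' a' => (∑ s, ∑ a, d s a * P s a s') * pol s' a'

/-- State-action distribution at time `t` when starting from `ρ0` and following `pol` in `P`. -/
noncomputable def traj {S A : Type*} [Fintype S] [Fintype A]
    (P : S → A → S → ℝ) (pol : S → A → ℝ) (ρ0 : S → ℝ) : ℕ → S → A → ℝ :=
  fun t => (stepDist P pol)^[t] (fun s a => ρ0 s * pol s a)

/-- Discounted return `η_M(π)` of policy `pol` in the MDP with kernel `P`. -/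
noncomputable def ret {S A : Type*} [Fintype S] [Fintype A]
    (P : S → A → S → ℝ) (pol : S → A → ℝ) (ρ0 : S → ℝ) (r : S → A → ℝ) (γ : ℝ) : ℝ :=
  ∑' t : ℕ, γ ^ t * ∑ s, ∑ a, traj P pol ρ0 t s a * r s a

/-- Value function `V^π_M(s)`. -/
noncomputable def Vf {S A : Type*} [Fintype S] [Fintype A] [DecidableEq S]
    (P : S → A → S → ℝ) (pol : S → A → ℝ) (r : S → A → ℝ) (γ : ℝ) (s0 : S) : ℝ :=
  ret P pol (fun s => if s = s0 then 1 else 0) r γ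

/-- Normalized discounted state-action occupancy `ρ̂(s,a)` of `pol` in kernel `P`. -/
noncomputable def occ {S A : Type*} [Fintype S] [Fintype A]
    (P : S → A → S → ℝ) (pol : S → A → ℝ) (ρ0 : S → ℝ) (γ : ℝ) : S → A → ℝ :=
  fun s a => (1 - γ) * ∑' t : ℕ, γ ^ t * traj P pol ρ0 t s a

/-! Under `pol` the states form a Markov chain with transition matrix
`K s s' = ∑ a, pol s a * P s a s'`, and every discounted quantity is read off its resolvent
`N = ∑ t, (γ K) ^ t = (1 - γ K)⁻¹`: with `R s = ∑ a, pol s a * r s a`, the return is `ρ0 N R`,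
the value function is `N R`, and the occupancy is `(1 - γ) (ρ0 N̂) s * pol s a`. The telescoping
lemma is then the second resolvent identity `N - N̂ = γ N̂ (K - K̂) N`. -/

open Matrix

theorem sub_eq_mul_sub_mul_of_mul_eq_one {R : Type*} [Ring R] {x y N N' : R}
    (hN : (1 - x) * N = 1) (hN' : N' * (1 - y) = 1) : N - N' = N' * (x - y) * N :=
  calc N - N' = N' * (1 - y) * N - N' * ((1 - x) * N) := by rw [hN', hN, one_mul, mul_one]
    _ = N' * (x - y) * N := by noncomm_ring

theorem HasSum.matrix_vecMul {ι m n R : Type*} [Fintype m] [NonUnitalNonAssocSemiring R]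
    [TopologicalSpace R] [IsTopologicalSemiring R] {f : ι → Matrix m n R} {N : Matrix m n R}
    (hf : HasSum f N) (v : m → R) : HasSum (fun i => v ᵥ* f i) (v ᵥ* N) :=
  hf.map (⟨⟨(v ᵥ* ·), vecMul_zero v⟩, fun _ _ => vecMul_add _ _ v⟩ : Matrix m n R →+ n → R)
    (continuous_const.matrix_vecMul continuous_id)

theorem summable_smul_pow_of_mem_rowStochastic {n : Type*} [Fintype n] [DecidableEq n]
    {K : Matrix n n ℝ} (hK : K ∈ rowStochastic ℝ n) {γ : ℝ} (hγ : |γ| < 1) :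
    Summable fun t : ℕ => (γ • K) ^ t := by
  refine Pi.summable.2 fun i => Pi.summable.2 fun j =>
    .of_norm_bounded (summable_geometric_of_lt_one (abs_nonneg γ) hγ) fun t => ?_
  rw [smul_pow, Matrix.smul_apply, smul_eq_mul, norm_mul, norm_pow, Real.norm_eq_abs,
    Real.norm_eq_abs, abs_of_nonneg (nonneg_of_mem_rowStochastic (pow_mem hK t))]
  exact mul_le_of_le_one_right (by positivity) (le_one_of_mem_rowStochastic (pow_mem hK t))

section MDP

variable {S A : Type*} [Fintype S] [Fintype A]

def stateKernel (P : S → A → S → ℝ) (pol : S → A → ℝ) : Matrix S S ℝ :=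
  of fun s s' => ∑ a, pol s a * P s a s'

def expectedReward (pol r : S → A → ℝ) : S → ℝ := fun s => ∑ a, pol s a * r s a

variable {P : S → A → S → ℝ} {pol : S → A → ℝ}

theorem sum_sum_mul_sum_sub_mul_eq_dotProduct (Phat : S → A → S → ℝ) (d V : S → ℝ) :
    ∑ s, ∑ a, d s * pol s a * ∑ s', (P s a s' - Phat s a s') * V s'
      = d ⬝ᵥ ((stateKernel P pol - stateKernel Phat pol) *ᵥ V) := by
  simp only [dotProduct, mulVec, Matrix.sub_apply, stateKernel, of_apply, ← sum_sub_distrib,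
    sum_mul, mul_sum]
  refine sum_congr rfl fun s _ => ?_
  rw [sum_comm]
  exact sum_congr rfl fun s' _ => sum_congr rfl fun a _ => by ring

variable [DecidableEq S]

theorem stateKernel_mem_rowStochastic
    (hP : ∀ s a s', 0 ≤ P s a s') (hPsum : ∀ s a, ∑ s', P s a s' = 1)
    (hpol : ∀ s a, 0 ≤ pol s a) (hpolsum : ∀ s, ∑ a, pol s a = 1) :
    stateKernel P pol ∈ rowStochastic ℝ S := by
  refine mem_rowStochastic_iff_sum.2
    ⟨fun s s' => sum_nonneg fun a _ => mul_nonneg (hpol s a) (hP s a s'), fun s => ?_⟩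
  simp only [stateKernel, of_apply]
  rw [sum_comm]
  simp only [← mul_sum, hPsum, mul_one, hpolsum]

theorem traj_apply (ρ : S → ℝ) (t : ℕ) (s : S) (a : A) :
    traj P pol ρ t s a = (ρ ᵥ* stateKernel P pol ^ t) s * pol s a := by
  induction t generalizing s a with
  | zero => simp [traj]
  | succ t ih =>
    rw [traj, Function.iterate_succ_apply', ← traj, pow_succ, ← vecMul_vecMul]
    simp only [stepDist, ih]
    generalize ρ ᵥ* stateKernel P pol ^ t = v
    simp only [vecMul, dotProduct, stateKernel, of_apply, mul_sum, mul_assoc]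

variable {γ : ℝ} {N : Matrix S S ℝ}

theorem hasSum_discounted_traj (hN : HasSum (fun t : ℕ => (γ • stateKernel P pol) ^ t) N)
    (ρ : S → ℝ) (s : S) (a : A) :
    HasSum (fun t => γ ^ t * traj P pol ρ t s a) ((ρ ᵥ* N) s * pol s a) := by
  have h := (Pi.hasSum.1 (hN.matrix_vecMul ρ) s).mul_right (pol s a)
  simpa only [traj_apply, smul_pow, vecMul_smul, Pi.smul_apply, smul_eq_mul, mul_assoc] using h

theorem ret_eq_vecMul_dotProduct (hN : HasSum (fun t : ℕ => (γ • stateKernel P pol) ^ t) N)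
    (ρ : S → ℝ) (r : S → A → ℝ) :
    ret P pol ρ r γ = ρ ᵥ* N ⬝ᵥ expectedReward pol r := by
  have h := hasSum_sum (s := univ) fun s _ => hasSum_sum (s := univ) fun a _ =>
    (hasSum_discounted_traj hN ρ s a).mul_right (r s a)
  simpa only [ret, dotProduct, expectedReward, mul_sum, mul_assoc] using h.tsum_eq

theorem Vf_eq_mulVec (hN : HasSum (fun t : ℕ => (γ • stateKernel P pol) ^ t) N)
    (r : S → A → ℝ) : Vf P pol r γ = N *ᵥ expectedReward pol r := by
  funext s
  have hδ : (fun s' => if s' = s then (1 : ℝ) else 0) = Pi.single s 1 :=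
    funext fun s' => by simp [Pi.single_apply]
  rw [Vf, ret_eq_vecMul_dotProduct hN, hδ, single_vecMul, one_smul]
  rfl

theorem occ_eq_smul_vecMul (hN : HasSum (fun t : ℕ => (γ • stateKernel P pol) ^ t) N) (ρ : S → ℝ) :
    occ P pol ρ γ = fun s a => ((1 - γ) • (ρ ᵥ* N)) s * pol s a := by
  funext s a
  rw [occ, (hasSum_discounted_traj hN ρ s a).tsum_eq, Pi.smul_apply, smul_eq_mul, mul_assoc]

end MDP

theorem telescoping_performance_difference_general
    {S A : Type*} [Fintype S] [Fintype A] [DecidableEq S]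
    (P Phat : S → A → S → ℝ) (pol : S → A → ℝ) (ρ0 : S → ℝ)
    (r : S → A → ℝ) (γ : ℝ)
    (hγ0 : 0 ≤ γ) (hγ1 : γ < 1)
    (hpol : ∀ s a, 0 ≤ pol s a) (hpolsum : ∀ s, ∑ a, pol s a = 1)
    (hP : ∀ s a s', 0 ≤ P s a s') (hPsum : ∀ s a, ∑ s', P s a s' = 1)
    (hPhat : ∀ s a s', 0 ≤ Phat s a s') (hPhatsum : ∀ s a, ∑ s', Phat s a s' = 1) :
    ret P pol ρ0 r γ - ret Phat pol ρ0 r γ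
      = (γ / (1 - γ)) * ∑ s, ∑ a, occ Phat pol ρ0 γ s a *
          ∑ s', (P s a s' - Phat s a s') * Vf P pol r γ s' := by
  have hγ : |γ| < 1 := abs_lt.2 ⟨by linarith, hγ1⟩
  have hK := summable_smul_pow_of_mem_rowStochastic
    (stateKernel_mem_rowStochastic hP hPsum hpol hpolsum) hγ
  have hKhat := summable_smul_pow_of_mem_rowStochastic
    (stateKernel_mem_rowStochastic hPhat hPhatsum hpol hpolsum) hγ
  rw [ret_eq_vecMul_dotProduct hK.hasSum, ret_eq_vecMul_dotProduct hKhat.hasSum,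
    occ_eq_smul_vecMul hKhat.hasSum, Vf_eq_mulVec hK.hasSum, sum_sum_mul_sum_sub_mul_eq_dotProduct, ← sub_dotProduct,
    ← vecMul_sub, sub_eq_mul_sub_mul_of_mul_eq_one hK.one_sub_mul_tsum_pow
      hKhat.tsum_pow_mul_one_sub, ← smul_sub, mul_smul_comm, smul_mul_assoc]
  simp only [vecMul_smul, smul_vecMul, smul_dotProduct, ← vecMul_vecMul, dotProduct_mulVec,
    smul_eq_mul]
  field_simp [sub_ne_zero.2 hγ1.ne']

/-- Telescoping performance difference: for two MDPs identical
except for transitions `P` and `P̂`,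
`η_M(π) − η_{M̂}(π) = (γ/(1−γ)) E_{(s,a)~ρ̂}[Σ_{s'} (P(s'|s,a) − P̂(s'|s,a)) V^π_M(s')]`. -/
theorem telescoping_performance_difference
    {S A : Type*} [Fintype S] [Fintype A] [DecidableEq S]
    (P Phat : S → A → S → ℝ) (pol : S → A → ℝ) (ρ0 : S → ℝ)
    (r : S → A → ℝ) (γ Rmax : ℝ)
    (hγ0 : 0 ≤ γ) (hγ1 : γ < 1)
    (hr : ∀ s a, |r s a| ≤ Rmax)
    (hρ0 : ∀ s, 0 ≤ ρ0 s) (hρ0sum : ∑ s, ρ0 s = 1)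
    (hpol : ∀ s a, 0 ≤ pol s a) (hpolsum : ∀ s, ∑ a, pol s a = 1)
    (hP : ∀ s a s', 0 ≤ P s a s') (hPsum : ∀ s a, ∑ s', P s a s' = 1)
    (hPhat : ∀ s a s', 0 ≤ Phat s a s') (hPhatsum : ∀ s a, ∑ s', Phat s a s' = 1) :
    ret P pol ρ0 r γ - ret Phat pol ρ0 r γ
      = (γ / (1 - γ)) * ∑ s, ∑ a, occ Phat pol ρ0 γ s a *
          ∑ s', (P s a s' - Phat s a s') * Vf P pol r γ s' :=
  telescoping_performance_difference_general P Phat pol ρ0 r γ hγ0 hγ1 hpol hpolsum hP hPsum hPhat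
    hPhatsum
end
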